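/- In general, try C then P else Q is NOT semantically equivalent to if C then C;P else Q: there exist programs C, P, Q such that Sem(try C then P else Q) ≠ Sem(if C then C;P else Q). A witness is C = skip or fail, P = skip, Q = skip: the try-program cannot fail from any graph, while the if-program can fail from every graph. -/

import Mathlib

/-- GP 2 abstract program syntax over a type `R` of rule-set calls. -/
inductive Prog (R : Type) : Type where
  | call  : R → Prog R                               -- rule-set call
  | seq   : Prog R → Prog R → Prog R                 -- P;Q
  | ite   : Prog R → Prog R → Prog R → Prog R        -- if C then P else Q
  | tryte : Prog R → Prog R → Prog R → Prog R        -- try C then P else Q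
  | if1   : Prog R → Prog R → Prog R                 -- if C then P
  | try1  : Prog R → Prog R → Prog R                 -- try C then P
  | alap  : Prog R → Prog R                          -- P!
  | or    : Prog R → Prog R → Prog R                 -- P or Q
  | skip  : Prog R
  | fail  : Prog R

/-- Configurations: an unfinished computation ⟨P,G⟩, a proper result G, or failure. -/
inductive Config (R Graph : Type) : Type where
  | run    : Prog R → Graph → Config R Graph
  | result : Graph → Config R Graph
  | fail   : Config R Graph

mutual
/-- The small-step transition relation → of GP 2, relative to the
    rule-set application relation `apply` (G ⇒_R H). -/
inductive Step {R Graph : Type} (apply : R → Graph → Graph → Prop) :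
    Config R Graph → Config R Graph → Prop where
  | call₁ {r G H} : apply r G H → Step apply (.run (.call r) G) (.result H)
  | call₂ {r G} : (∀ H, ¬ apply r G H) → Step apply (.run (.call r) G) .fail
  | seq₁ {P Q P' G H} : Step apply (.run P G) (.run P' H) →
      Step apply (.run (.seq P Q) G) (.run (.seq P' Q) H)
  | seq₂ {P Q G H} : Step apply (.run P G) (.result H) →
      Step apply (.run (.seq P Q) G) (.run Q H)
  | seq₃ {P Q G} : Step apply (.run P G) .fail →
      Step apply (.run (.seq P Q) G) .fail
  | if₁ {C P Q G H} : StepPlus apply (.run C G) (.result H) →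
      Step apply (.run (.ite C P Q) G) (.run P G)
  | if₂ {C P Q G} : StepPlus apply (.run C G) .fail →
      Step apply (.run (.ite C P Q) G) (.run Q G)
  | try₁ {C P Q G H} : StepPlus apply (.run C G) (.result H) →
      Step apply (.run (.tryte C P Q) G) (.run P H)
  | try₂ {C P Q G} : StepPlus apply (.run C G) .fail →
      Step apply (.run (.tryte C P Q) G) (.run Q G)
  | alap₁ {P G H} : StepPlus apply (.run P G) (.result H) →
      Step apply (.run (.alap P) G) (.run (.alap P) H)
  | alap₂ {P G} : StepPlus apply (.run P G) .fail →
      Step apply (.run (.alap P) G) (.result G)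
  | or₁ {P Q G} : Step apply (.run (.or P Q) G) (.run P G)
  | or₂ {P Q G} : Step apply (.run (.or P Q) G) (.run Q G)
  | skip {G} : Step apply (.run .skip G) (.result G)
  | fail {G} : Step apply (.run .fail G) .fail
  | if₃ {C P G H} : StepPlus apply (.run C G) (.result H) →
      Step apply (.run (.if1 C P) G) (.run P G)
  | if₄ {C P G} : StepPlus apply (.run C G) .fail →
      Step apply (.run (.if1 C P) G) (.result G)
  | try₃ {C P G H} : StepPlus apply (.run C G) (.result H) →
      Step apply (.run (.try1 C P) G) (.run P H)
  | try₄ {C P G} : StepPlus apply (.run C G) .fail →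
      Step apply (.run (.try1 C P) G) (.result G)

/-- The transitive closure →⁺ of the small-step relation. -/
inductive StepPlus {R Graph : Type} (apply : R → Graph → Graph → Prop) :
    Config R Graph → Config R Graph → Prop where
  | single {γ δ} : Step apply γ δ → StepPlus apply γ δ
  | tail {γ δ ε} : StepPlus apply γ δ → Step apply δ ε → StepPlus apply γ ε
end

/-- `P` can diverge from `G`: there is an infinite →-sequence from ⟨P,G⟩. -/
def CanDiverge {R Graph : Type} (apply : R → Graph → Graph → Prop)
    (P : Prog R) (G : Graph) : Prop :=
  ∃ f : ℕ → Config R Graph, f 0 = .run P G ∧ ∀ n, Step apply (f n) (f (n + 1))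

/-- `P` can get stuck from `G`: some terminal configuration ⟨Q,H⟩ is reachable (→*) from ⟨P,G⟩. -/
def CanGetStuck {R Graph : Type} (apply : R → Graph → Graph → Prop)
    (P : Prog R) (G : Graph) : Prop :=
  ∃ Q H, Relation.ReflTransGen (Step apply) (.run P G) (.run Q H) ∧
    ∀ δ, ¬ Step apply (.run Q H) δ

/-- Possible outcomes of a program run: a proper result graph, failure, or ⊥. -/
inductive SemVal (Graph : Type) : Type where
  | graph : Graph → SemVal Graph
  | fail  : SemVal Graph
  | bot   : SemVal Graph

/-- The semantic function: `Sem apply P G` is the set of all possible results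
    of executing `P` on `G`. -/
def Sem {R Graph : Type} (apply : R → Graph → Graph → Prop)
    (P : Prog R) (G : Graph) : Set (SemVal Graph) :=
  fun X => match X with
    | .graph H => StepPlus apply (.run P G) (.result H)
    | .fail => StepPlus apply (.run P G) .fail
    | .bot => CanDiverge apply P G ∨ CanGetStuck apply P G

/-- Semantic equivalence of programs. -/
def ProgEquiv {R Graph : Type} (apply : R → Graph → Graph → Prop)
    (P Q : Prog R) : Prop :=
  ∀ G, Sem apply P G = Sem apply Q G

/-! With `C = skip or fail`, every run of `try C then skip else skip` passes through
`⟨skip, H⟩` to the result `H` whichever way `C` goes, so it cannot fail. The program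
`if C then C;skip else skip` may take its then-branch after `C` succeeded and then let the second
copy of `C` choose `fail`. -/

namespace StepPlus

variable {R Graph : Type} {apply : R → Graph → Graph → Prop}

/-- `StepPlus` is mutual with `Step`, so `induction` does not apply to it; converting to
`Relation.TransGen` makes the closure's induction principles available. -/
theorem toTransGen {γ δ : Config R Graph} (h : StepPlus apply γ δ) :
    Relation.TransGen (Step apply) γ δ := by
  refine h.rec (motive_1 := fun _ _ _ => True)
    (motive_2 := fun γ δ _ => Relation.TransGen (Step apply) γ δ)
    ?_ ?_ ?_ ?_ ?_ ?_ ?_ ?_ ?_ ?_ ?_ ?_ ?_ ?_ ?_ ?_ ?_ ?_ ?_ ?_ ?_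
  all_goals intros
  any_goals exact trivial
  all_goals solve_by_elim [Relation.TransGen.single, Relation.TransGen.tail]

theorem of_transGen {γ δ : Config R Graph} (h : Relation.TransGen (Step apply) γ δ) :
    StepPlus apply γ δ := by
  induction h with
  | single h => exact .single h
  | tail _ h ih => exact ih.tail h

end StepPlus

section

variable {R Graph : Type} {apply : R → Graph → Graph → Prop}

theorem reachable_tryte_skip_skip {C : Prog R} {G : Graph} {γ : Config R Graph}
    (h : Relation.TransGen (Step apply) (.run (.tryte C .skip .skip) G) γ) :
    (∃ H, γ = .run .skip H) ∨ ∃ H, γ = .result H := by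
  induction h with
  | single h => cases h <;> exact .inl ⟨_, rfl⟩
  | tail _ h ih =>
    rcases ih with ⟨H, rfl⟩ | ⟨H, rfl⟩
    · cases h; exact .inr ⟨_, rfl⟩
    · cases h

theorem tryte_skip_skip_not_fail (C : Prog R) (G : Graph) :
    SemVal.fail ∉ Sem apply (.tryte C .skip .skip) G := fun h => by
  rcases reachable_tryte_skip_skip h.toTransGen with ⟨_, h⟩ | ⟨_, h⟩ <;> cases h

/-- Failure of `P` propagates to `P;Q`: every configuration on the way to `fail` is still a
running program, since results and `fail` have no successors. -/
theorem seq_fail_of_fail {P Q : Prog R} {G : Graph} (h : SemVal.fail ∈ Sem apply P G) :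
    SemVal.fail ∈ Sem apply (.seq P Q) G := by
  suffices ∀ γ, Relation.TransGen (Step apply) γ .fail → ∀ P G, γ = .run P G →
      Relation.TransGen (Step apply) (.run (.seq P Q) G) .fail from
    .of_transGen (this _ h.toTransGen P G rfl)
  intro γ hγ
  induction hγ using Relation.TransGen.head_induction_on with
  | single h =>
    rintro P G rfl
    exact .single (.seq₃ h)
  | @head _ δ h hδ ih =>
    rintro P G rfl
    match δ, h, hδ, ih with
    | .run P' H, h, _, ih => exact .head (.seq₁ h) (ih P' H rfl)
    | .result _, _, hδ, _ | .fail, _, hδ, _ =>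
      obtain ⟨_, h, _⟩ := Relation.TransGen.head'_iff.1 hδ
      cases h

theorem ite_seq_fail {C P Q : Prog R} {G H : Graph} (hC : SemVal.graph H ∈ Sem apply C G)
    (hC_fail : SemVal.fail ∈ Sem apply C G) :
    SemVal.fail ∈ Sem apply (.ite C (.seq C P) Q) G :=
  .of_transGen (.head (.if₁ hC) (seq_fail_of_fail hC_fail).toTransGen)

theorem or_skip_fail_result (G : Graph) :
    SemVal.graph G ∈ Sem apply (.or .skip .fail) G :=
  .tail (.single .or₁) .skip

theorem or_skip_fail_fail (G : Graph) :
    SemVal.fail ∈ Sem apply (.or .skip .fail) G :=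
  .tail (.single .or₂) .fail

end

/-- in general, try C then P else Q is NOT semantically equivalent
    to if C then C;P else Q. A witness is C = skip or fail, P = Q = skip:
    the try-program cannot fail from any graph, the if-program can fail from
    every graph, hence the two programs have different semantic functions. -/
theorem try_not_equiv_if_seq {R Graph : Type} [Nonempty Graph]
    (apply : R → Graph → Graph → Prop) :
    (∀ G : Graph,
      SemVal.fail ∉
        Sem apply
          (Prog.tryte (Prog.or Prog.skip Prog.fail) Prog.skip Prog.skip) G) ∧
    (∀ G : Graph,
      SemVal.fail ∈
        Sem apply
          (Prog.ite (Prog.or Prog.skip Prog.fail)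
            (Prog.seq (Prog.or Prog.skip Prog.fail) Prog.skip) Prog.skip) G) ∧
    ∃ C P Q : Prog R,
      ¬ ProgEquiv apply (Prog.tryte C P Q) (Prog.ite C (Prog.seq C P) Q) := by
  have try_no_fail (G : Graph) := tryte_skip_skip_not_fail (apply := apply) (.or .skip .fail) G
  have if_fails (G : Graph) := ite_seq_fail (apply := apply) (P := .skip) (Q := .skip)
    (or_skip_fail_result G) (or_skip_fail_fail G)
  refine ⟨try_no_fail, if_fails, .or .skip .fail, .skip, .skip, fun h_equiv => ?_⟩
  obtain ⟨G⟩ := ‹Nonempty Graph›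
  exact try_no_fail G (h_equiv G ▸ if_fails G)
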